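/- arXiv:0903.3932 — 5 statements merged into one kernel-verified Lean document; each statement's English description precedes it below -/
import Mathlib

section
/- Let (M, g, f) be a complete gradient shrinking Ricci soliton normalized so that Ric + Hess f = (1/2)g and R + |∇f|² = f, and suppose R ≥ 0. Then for every x ∈ M, f(x) ≤ (1/4)(r(x) + 2√(f(x₀)))², where r(x) = d(x₀, x) for a fixed basepoint x₀. -/
open MeasureTheory Matrix Set

noncomputable section

/-- Points of the manifold, modeled in a single global chart. -/
abbrev Pt (n : ℕ) := EuclideanSpace ℝ (Fin n)

variable {n : ℕ}

/-- Partial derivative in the `i`-th coordinate direction. -/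
def pd (i : Fin n) (F : Pt n → ℝ) (x : Pt n) : ℝ :=
  fderiv ℝ F x (EuclideanSpace.single i 1)

/-- A smooth Riemannian metric in a global chart. -/
structure RMetric (n : ℕ) where
  g : Pt n → Matrix (Fin n) (Fin n) ℝ
  smooth : ∀ i j, ContDiff ℝ (⊤ : ℕ∞) fun x => g x i j
  symm : ∀ x, (g x).IsSymm
  posdef : ∀ x, (g x).PosDef

variable (G : RMetric n)

/-- Inverse metric `g^{ij}`. -/
def ginv (x : Pt n) : Matrix (Fin n) (Fin n) ℝ := (G.g x)⁻¹

/-- Christoffel symbols `Γ^k_{ij}`. -/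
def christoffel (k i j : Fin n) (x : Pt n) : ℝ :=
  (1/2) * ∑ l, ginv G x k l *
    (pd i (fun y => G.g y j l) x + pd j (fun y => G.g y i l) x - pd l (fun y => G.g y i j) x)

/-- Ricci tensor `Ric_{jk} = R^i_{ijk}`. -/
def ricci (j k : Fin n) (x : Pt n) : ℝ :=
  ∑ i, (pd i (christoffel G i j k) x - pd j (christoffel G i i k) x
    + ∑ m, (christoffel G i i m x * christoffel G m j k x
          - christoffel G i j m x * christoffel G m i k x))

/-- Ricci quadratic form `Ric(v,v)`. -/
def ricciQ (x : Pt n) (v : Fin n → ℝ) : ℝ := ∑ j, ∑ k, ricci G j k x * v j * v k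

/-- Scalar curvature `R = g^{jk} Ric_{jk}`. -/
def scal (x : Pt n) : ℝ := ∑ j, ∑ k, ginv G x j k * ricci G j k x

/-- Hessian `(Hess f)_{ij} = ∂_i∂_j f - Γ^k_{ij} ∂_k f`. -/
def hessf (f : Pt n → ℝ) (i j : Fin n) (x : Pt n) : ℝ :=
  pd i (pd j f) x - ∑ k, christoffel G k i j x * pd k f x

/-- Laplace–Beltrami operator `Δf = g^{ij} (Hess f)_{ij}`. -/
def lap (f : Pt n → ℝ) (x : Pt n) : ℝ := ∑ i, ∑ j, ginv G x i j * hessf G f i j x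

/-- Squared norm of the gradient, `|∇f|² = g^{ij} ∂_i f ∂_j f`. -/
def gradNormSq (f : Pt n → ℝ) (x : Pt n) : ℝ :=
  ∑ i, ∑ j, ginv G x i j * pd i f x * pd j f x

/-- Gradient shrinking Ricci soliton equation `Ric + Hess f = (1/2) g`. -/
def IsSoliton (f : Pt n → ℝ) : Prop :=
  ContDiff ℝ (⊤ : ℕ∞) f ∧ ∀ x : Pt n, ∀ i j : Fin n,
    ricci G i j x + hessf G f i j x = (1/2) * G.g x i j

/-- Normalization `R + |∇f|² = f`. -/
def Normalized (f : Pt n → ℝ) : Prop := ∀ x, scal G x + gradNormSq G f x = f x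

/-- Riemannian speed of a curve. -/
def speed (γ : ℝ → Pt n) (t : ℝ) : ℝ :=
  Real.sqrt (∑ i, ∑ j, G.g (γ t) i j * deriv γ t i * deriv γ t j)

/-- Riemannian length of a curve on `[a,b]`. -/
def pathLength (γ : ℝ → Pt n) (a b : ℝ) : ℝ := ∫ t in a..b, speed G γ t

/-- Riemannian distance: infimum of lengths of connecting `C¹` paths. -/
def rdist (x y : Pt n) : ℝ :=
  sInf {L | ∃ γ : ℝ → Pt n, ContDiff ℝ 1 γ ∧ γ 0 = x ∧ γ 1 = y ∧ L = pathLength G γ 0 1}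

/-- Completeness (in the Hopf–Rinow form: closed metric balls are compact). -/
def IsCompleteMetric : Prop := ∀ x : Pt n, ∀ r : ℝ, IsCompact {y | rdist G x y ≤ r}

/-- Geodesic equation on `[a,b]`. -/
def IsGeodesicOn (γ : ℝ → Pt n) (a b : ℝ) : Prop :=
  ContDiff ℝ (⊤ : ℕ∞) γ ∧ ∀ t ∈ Icc a b, ∀ i,
    deriv (fun s => deriv γ s i) t
      + ∑ j, ∑ k, christoffel G i j k (γ t) * deriv γ t j * deriv γ t k = 0

/-- Unit speed parametrization on `[a,b]`. -/
def UnitSpeedOn (γ : ℝ → Pt n) (a b : ℝ) : Prop := ∀ t ∈ Icc a b, speed G γ t = 1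

/-- The curve realizes the distance between its endpoints. -/
def IsMinimizingOn (γ : ℝ → Pt n) (a b : ℝ) : Prop :=
  pathLength G γ a b = rdist G (γ a) (γ b)

/-- Riemannian volume measure `√(det g) dx`. -/
def rmeasure : Measure (Pt n) :=
  volume.withDensity fun x => ENNReal.ofReal (Real.sqrt (G.g x).det)

/-- Sublevel set `D(r) = {ρ < r}` with `ρ = 2√f`. -/
def Dset (f : Pt n → ℝ) (r : ℝ) : Set (Pt n) := {x | 2 * Real.sqrt (f x) < r}

/-- `V(r)`, the Riemannian volume of `D(r)`. -/
def Vfun (f : Pt n → ℝ) (r : ℝ) : ℝ := (rmeasure G (Dset f r)).toReal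

/-- Integral of `h` over `S` against the Riemannian measure. -/
def Ig (S : Set (Pt n)) (h : Pt n → ℝ) : ℝ := ∫ x in S, h x ∂(rmeasure G)

/-- Geodesic ball. -/
def rball (x₀ : Pt n) (r : ℝ) : Set (Pt n) := {y | rdist G x₀ y < r}


namespace Stmt2Aux

variable {n : ℕ}

lemma quad_eq (A : Matrix (Fin n) (Fin n) ℝ) (a b : Fin n → ℝ) :
    ∑ i, ∑ j, A i j * a i * b j = a ⬝ᵥ A *ᵥ b := by
  simp only [dotProduct, Matrix.mulVec, Finset.mul_sum]
  exact Finset.sum_congr rfl fun i _ => Finset.sum_congr rfl fun j _ => by ring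

lemma psd_nonneg {M : Matrix (Fin n) (Fin n) ℝ} (hM : M.PosSemidef) (v : Fin n → ℝ) :
    0 ≤ v ⬝ᵥ M *ᵥ v := by simpa using hM.dotProduct_mulVec_nonneg v

lemma symm_pair (M : Matrix (Fin n) (Fin n) ℝ) (hs : M.IsSymm) (u w : Fin n → ℝ) :
    u ⬝ᵥ M *ᵥ w = w ⬝ᵥ M *ᵥ u := by
  rw [← quad_eq M u w, ← quad_eq M w u, Finset.sum_comm]
  refine Finset.sum_congr rfl fun j _ => Finset.sum_congr rfl fun i _ => ?_
  rw [hs.apply j i]; ring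

lemma cs_posdef {M : Matrix (Fin n) (Fin n) ℝ} (hM : M.PosDef) (hs : M.IsSymm)
    (u w : Fin n → ℝ) :
    (u ⬝ᵥ M *ᵥ w) ^ 2 ≤ (u ⬝ᵥ M *ᵥ u) * (w ⬝ᵥ M *ᵥ w) := by
  have key : ∀ t : ℝ, 0 ≤ (w ⬝ᵥ M *ᵥ w) * (t * t) + (2 * (u ⬝ᵥ M *ᵥ w)) * t
      + (u ⬝ᵥ M *ᵥ u) := by
    intro t
    have h0 : 0 ≤ (u + t • w) ⬝ᵥ M *ᵥ (u + t • w) := psd_nonneg hM.posSemidef _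
    have hexp : (u + t • w) ⬝ᵥ M *ᵥ (u + t • w)
        = (w ⬝ᵥ M *ᵥ w) * (t * t) + (2 * (u ⬝ᵥ M *ᵥ w)) * t + (u ⬝ᵥ M *ᵥ u) := by
      rw [Matrix.mulVec_add, Matrix.mulVec_smul, add_dotProduct,
        smul_dotProduct, dotProduct_add, dotProduct_smul,
        dotProduct_add, dotProduct_smul, symm_pair M hs w u]
      simp only [smul_eq_mul]
      ring
    linarith [hexp ▸ h0]
  have hd := discrim_le_zero key
  rw [discrim] at hd
  nlinarith [hd]

lemma cs_inv (G : RMetric n) (x : Pt n) (v w : Fin n → ℝ) :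
    (∑ i, w i * v i) ^ 2 ≤
      (∑ i, ∑ j, ginv G x i j * v i * v j) * (∑ i, ∑ j, G.g x i j * w i * w j) := by
  set M := G.g x with hM
  have hpd : M.PosDef := G.posdef x
  have hs : M.IsSymm := G.symm x
  have hdet : IsUnit M.det := hpd.det_pos.ne'.isUnit
  set u := M⁻¹ *ᵥ v with hu
  have hMu : M *ᵥ u = v := by
    rw [hu, Matrix.mulVec_mulVec, Matrix.mul_nonsing_inv _ hdet, Matrix.one_mulVec]
  have h1 : ∑ i, w i * v i = u ⬝ᵥ M *ᵥ w := by
    rw [symm_pair M hs u w, hMu]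
    simp [dotProduct]
  have h2 : ∑ i, ∑ j, ginv G x i j * v i * v j = u ⬝ᵥ M *ᵥ u := by
    have := quad_eq (ginv G x) v v
    rw [this, hMu]
    show v ⬝ᵥ M⁻¹ *ᵥ v = u ⬝ᵥ v
    rw [← hu, dotProduct_comm]
  have h3 : ∑ i, ∑ j, G.g x i j * w i * w j = w ⬝ᵥ M *ᵥ w := quad_eq M w w
  rw [h1, h2, h3]
  exact cs_posdef hpd hs u w

lemma sum_single (v : Pt n) : ∑ i, v i • EuclideanSpace.single i (1 : ℝ) = v := by
  have h := (EuclideanSpace.basisFun (Fin n) ℝ).sum_repr v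
  simpa [EuclideanSpace.basisFun_apply, EuclideanSpace.basisFun_repr] using h

lemma fderiv_apply_eq (f : Pt n → ℝ) (x : Pt n) (v : Pt n) :
    fderiv ℝ f x v = ∑ i, v i * pd i f x := by
  conv_lhs => rw [← sum_single v]
  rw [map_sum]
  simp [pd, smul_eq_mul]

lemma speed_sq (G : RMetric n) (γ : ℝ → Pt n) (t : ℝ) :
    speed G γ t ^ 2 = ∑ i, ∑ j, G.g (γ t) i j * deriv γ t i * deriv γ t j := by
  have h0 : 0 ≤ ∑ i, ∑ j, G.g (γ t) i j * deriv γ t i * deriv γ t j := by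
    rw [quad_eq]
    exact psd_nonneg (G.posdef (γ t)).posSemidef _
  rw [speed, Real.sq_sqrt h0]

lemma gradNormSq_nonneg (G : RMetric n) (f : Pt n → ℝ) (x : Pt n) :
    0 ≤ gradNormSq G f x := by
  rw [gradNormSq, quad_eq]
  exact psd_nonneg (G.posdef x).posSemidef.inv _

lemma path_bound (G : RMetric n) (f : Pt n → ℝ) (hf : ContDiff ℝ (⊤ : ℕ∞) f)
    (hf0 : ∀ x, 0 ≤ f x) (hfg : ∀ x, gradNormSq G f x ≤ f x)
    (γ : ℝ → Pt n) (hγ : ContDiff ℝ 1 γ) {ε : ℝ} (hε : 0 < ε) :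
    Real.sqrt (f (γ 1) + ε) - Real.sqrt (f (γ 0) + ε) ≤ (1/2) * pathLength G γ 0 1 := by
  set F : ℝ → ℝ := fun t => f (γ t) + ε with hF
  have hFpos : ∀ t, 0 < F t := fun t => by
    have := hf0 (γ t); simp only [hF]; linarith
  set D : ℝ → ℝ := fun t => (fderiv ℝ f (γ t)) (deriv γ t) with hD
  set h' : ℝ → ℝ := fun t => 1 / (2 * Real.sqrt (F t)) * D t with hh'
  have hγd : ∀ t, HasDerivAt γ (deriv γ t) t := fun t =>
    ((hγ.differentiable one_ne_zero) t).hasDerivAt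
  have hFd : ∀ t, HasDerivAt F (D t) t := by
    intro t
    have h1 : HasDerivAt (fun s => f (γ s)) (D t) t :=
      (((hf.differentiable (by simp)) (γ t)).hasFDerivAt).comp_hasDerivAt t (hγd t)
    simpa only [hF] using h1.add_const ε
  have hhd : ∀ t, HasDerivAt (fun s => Real.sqrt (F s)) (h' t) t := by
    intro t
    have h2 := (Real.hasDerivAt_sqrt (ne_of_gt (hFpos t))).comp t (hFd t)
    simpa [hh', Function.comp_def] using h2
  have hγc : Continuous γ := hγ.continuous
  have hγ' : Continuous (deriv γ) := hγ.continuous_deriv le_rfl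
  have hDc : Continuous D := by
    have h1 : Continuous fun t => fderiv ℝ f (γ t) :=
      (hf.continuous_fderiv (by simp)).comp hγc
    exact h1.clm_apply hγ'
  have hFc : Continuous F := ((hf.continuous).comp hγc).add continuous_const
  have hsc : Continuous fun t => Real.sqrt (F t) := Real.continuous_sqrt.comp hFc
  have hne : ∀ t, 2 * Real.sqrt (F t) ≠ 0 := fun t => by
    have := Real.sqrt_pos.mpr (hFpos t); positivity
  have hh'c : Continuous h' :=
    (continuous_const.div (continuous_const.mul hsc) hne).mul hDc
  have hspeedc : Continuous (speed G γ) := by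
    apply Real.continuous_sqrt.comp
    apply continuous_finset_sum; intro i _
    apply continuous_finset_sum; intro j _
    exact (((G.smooth i j).continuous.comp hγc).mul
      ((EuclideanSpace.proj i).continuous.comp hγ')).mul
      ((EuclideanSpace.proj j).continuous.comp hγ')
  have hpt : ∀ t, h' t ≤ (1/2) * speed G γ t := by
    intro t
    have hs : 0 < Real.sqrt (F t) := Real.sqrt_pos.mpr (hFpos t)
    have hQ := speed_sq G γ t
    have hDeq : D t = ∑ i, deriv γ t i * pd i f (γ t) := fderiv_apply_eq f (γ t) (deriv γ t)
    have hcs : (D t) ^ 2 ≤ gradNormSq G f (γ t) * speed G γ t ^ 2 := by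
      rw [hDeq, hQ, gradNormSq]
      exact cs_inv G (γ t) (fun i => pd i f (γ t)) (fun i => deriv γ t i)
    have hgn : gradNormSq G f (γ t) ≤ F t := by
      have := hfg (γ t); simp only [hF]; linarith
    have hsp0 : 0 ≤ speed G γ t := Real.sqrt_nonneg _
    have h4 : (D t) ^ 2 ≤ (Real.sqrt (F t) * speed G γ t) ^ 2 := by
      have he : (Real.sqrt (F t) * speed G γ t) ^ 2 = F t * speed G γ t ^ 2 := by
        rw [mul_pow, Real.sq_sqrt (hFpos t).le]
      rw [he]
      exact hcs.trans (mul_le_mul_of_nonneg_right hgn (sq_nonneg _))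
    have hrhs : 0 ≤ Real.sqrt (F t) * speed G γ t := mul_nonneg hs.le hsp0
    have h5 : D t ≤ Real.sqrt (F t) * speed G γ t := by
      have h6 := Real.sqrt_le_sqrt h4
      rw [Real.sqrt_sq_eq_abs, Real.sqrt_sq_eq_abs, abs_of_nonneg hrhs] at h6
      exact (le_abs_self _).trans h6
    have heq : h' t = D t / (2 * Real.sqrt (F t)) := by rw [hh']; ring
    rw [heq, div_le_iff₀ (by positivity)]
    calc D t ≤ Real.sqrt (F t) * speed G γ t := h5
      _ = 1/2 * speed G γ t * (2 * Real.sqrt (F t)) := by ring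
  have hFTC : ∫ t in (0:ℝ)..1, h' t = Real.sqrt (F 1) - Real.sqrt (F 0) :=
    intervalIntegral.integral_eq_sub_of_hasDerivAt (fun t _ => hhd t)
      (hh'c.intervalIntegrable 0 1)
  have hmono : ∫ t in (0:ℝ)..1, h' t ≤ ∫ t in (0:ℝ)..1, (1/2) * speed G γ t :=
    intervalIntegral.integral_mono_on zero_le_one (hh'c.intervalIntegrable 0 1)
      ((continuous_const.mul hspeedc).intervalIntegrable 0 1) (fun t _ => hpt t)
  have hhalf : ∫ t in (0:ℝ)..1, (1/2) * speed G γ t = (1/2) * pathLength G γ 0 1 := by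
    rw [pathLength, intervalIntegral.integral_const_mul]
  have : Real.sqrt (F 1) - Real.sqrt (F 0) ≤ (1/2) * pathLength G γ 0 1 := by
    rw [← hFTC, ← hhalf]; exact hmono
  simpa only [hF] using this

end Stmt2Aux

open Stmt2Aux in
/-- upper bound `f(x) ≤ (1/4)(r(x) + 2√(f(x₀)))²`. -/
theorem stmt2 (n : ℕ) (G : RMetric n) (f : Pt n → ℝ)
    (hcomp : IsCompleteMetric G) (hsol : IsSoliton G f) (hnorm : Normalized G f)
    (hR : ∀ x, 0 ≤ scal G x) (x₀ : Pt n) :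
    ∀ x : Pt n, f x ≤ (1/4) * (rdist G x₀ x + 2 * Real.sqrt (f x₀))^2 := by
  obtain ⟨hf, -⟩ := hsol
  have hf0 : ∀ y, 0 ≤ f y := fun y => by
    have h1 := hnorm y; have h2 := hR y; have h3 := gradNormSq_nonneg G f y; linarith
  have hfg : ∀ y, gradNormSq G f y ≤ f y := fun y => by
    have h1 := hnorm y; have h2 := hR y; linarith
  intro x
  have hSne : Set.Nonempty {L | ∃ γ : ℝ → Pt n, ContDiff ℝ 1 γ ∧ γ 0 = x₀ ∧ γ 1 = x ∧
      L = pathLength G γ 0 1} := by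
    refine ⟨pathLength G (fun t => x₀ + t • (x - x₀)) 0 1,
      fun t => x₀ + t • (x - x₀), ?_, ?_, ?_, rfl⟩
    · exact contDiff_const.add (contDiff_id.smul contDiff_const)
    · simp
    · simp
  have hL0 : ∀ L ∈ {L | ∃ γ : ℝ → Pt n, ContDiff ℝ 1 γ ∧ γ 0 = x₀ ∧ γ 1 = x ∧
      L = pathLength G γ 0 1}, (0:ℝ) ≤ L := by
    rintro L ⟨γ, hγ, h0, h1, rfl⟩
    exact intervalIntegral.integral_nonneg zero_le_one fun t _ => Real.sqrt_nonneg _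
  have hkey : ∀ L ∈ {L | ∃ γ : ℝ → Pt n, ContDiff ℝ 1 γ ∧ γ 0 = x₀ ∧ γ 1 = x ∧
      L = pathLength G γ 0 1}, Real.sqrt (f x) - Real.sqrt (f x₀) ≤ (1/2) * L := by
    rintro L ⟨γ, hγ, h0, h1, rfl⟩
    have hb : ∀ ε ∈ Set.Ioi (0:ℝ),
        Real.sqrt (f x + ε) - Real.sqrt (f x₀ + ε) ≤ (1/2) * pathLength G γ 0 1 := by
      intro ε hε
      have := path_bound G f hf hf0 hfg γ hγ hε
      rwa [h0, h1] at this
    have hc : Continuous fun ε : ℝ => Real.sqrt (f x + ε) - Real.sqrt (f x₀ + ε) := by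
      exact (Real.continuous_sqrt.comp (continuous_const.add continuous_id)).sub
        (Real.continuous_sqrt.comp (continuous_const.add continuous_id))
    have ht : Filter.Tendsto (fun ε : ℝ => Real.sqrt (f x + ε) - Real.sqrt (f x₀ + ε))
        (nhdsWithin 0 (Set.Ioi 0)) (nhds (Real.sqrt (f x) - Real.sqrt (f x₀))) := by
      have h2 := (hc.tendsto 0).mono_left (nhdsWithin_le_nhds (s := Set.Ioi (0:ℝ)))
      simpa using h2
    exact le_of_tendsto ht (Filter.eventually_of_mem self_mem_nhdsWithin hb)
  have hrd : 2 * (Real.sqrt (f x) - Real.sqrt (f x₀)) ≤ rdist G x₀ x := by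
    rw [rdist]
    exact le_csInf hSne fun L hL => by linarith [hkey L hL]
  have hrd0 : (0:ℝ) ≤ rdist G x₀ x := by
    rw [rdist]
    exact le_csInf hSne hL0
  have hs := Real.sq_sqrt (hf0 x)
  have h6 : Real.sqrt (f x) ≤ (1/2) * (rdist G x₀ x + 2 * Real.sqrt (f x₀)) := by linarith
  have h7 : Real.sqrt (f x) ^ 2 ≤ ((1/2) * (rdist G x₀ x + 2 * Real.sqrt (f x₀))) ^ 2 :=
    pow_le_pow_left₀ (Real.sqrt_nonneg _) h6 2
  calc f x = Real.sqrt (f x) ^ 2 := hs.symm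
    _ ≤ ((1/2) * (rdist G x₀ x + 2 * Real.sqrt (f x₀))) ^ 2 := h7
    _ = (1/4) * (rdist G x₀ x + 2 * Real.sqrt (f x₀)) ^ 2 := by ring
end
end

section
/- Let (M, g, f) satisfy Ric + Hess f = (1/2)g with R + |∇f|² = f and R ≥ 0. Then |∇f|(x) ≤ (1/2) r(x) + √(f(x₀)) for all x, where r(x) = d(x₀, x). -/
open MeasureTheory Matrix Set

noncomputable section

variable {n : ℕ}

variable (G : RMetric n)

section AuxStmt3

private lemma quad_eq_dot {m : ℕ} (A : Matrix (Fin m) (Fin m) ℝ) (v w : Fin m → ℝ) :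
    ∑ i, ∑ j, A i j * v i * w j = v ⬝ᵥ A *ᵥ w := by
  simp only [dotProduct, mulVec, Finset.mul_sum]
  exact Finset.sum_congr rfl fun i _ => Finset.sum_congr rfl fun j _ => by ring

private lemma psd_dot_nonneg {m : ℕ} {A : Matrix (Fin m) (Fin m) ℝ}
    (hA : A.PosSemidef) (v : Fin m → ℝ) : 0 ≤ v ⬝ᵥ A *ᵥ v := by
  simpa using hA.re_dotProduct_nonneg v

private lemma cs_ineq {m : ℕ} {A : Matrix (Fin m) (Fin m) ℝ}
    (hA : A.PosDef) (v w : Fin m → ℝ) :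
    (v ⬝ᵥ A *ᵥ w) ^ 2 ≤ (v ⬝ᵥ A *ᵥ v) * (w ⬝ᵥ A *ᵥ w) := by
  have hsymm : ∀ u u' : Fin m → ℝ, u ⬝ᵥ A *ᵥ u' = u' ⬝ᵥ A *ᵥ u := by
    intro u u'
    rw [← quad_eq_dot, ← quad_eq_dot, Finset.sum_comm]
    refine Finset.sum_congr rfl fun i _ => Finset.sum_congr rfl fun j _ => ?_
    have h := congrFun (congrFun hA.1.eq i) j
    simp only [Matrix.conjTranspose_apply, star_trivial] at h
    rw [← h]; ring
  have key : ∀ x : ℝ, 0 ≤ (w ⬝ᵥ A *ᵥ w) * (x * x) + (2 * (v ⬝ᵥ A *ᵥ w)) * x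
      + (v ⬝ᵥ A *ᵥ v) := by
    intro x
    have h0 : 0 ≤ (v + x • w) ⬝ᵥ A *ᵥ (v + x • w) :=
      psd_dot_nonneg hA.posSemidef _
    have hexp : (v + x • w) ⬝ᵥ A *ᵥ (v + x • w)
        = (w ⬝ᵥ A *ᵥ w) * (x * x) + (2 * (v ⬝ᵥ A *ᵥ w)) * x + (v ⬝ᵥ A *ᵥ v) := by
      have hsym := hsymm w v
      simp only [Matrix.mulVec_add, Matrix.mulVec_smul, dotProduct_add,
        add_dotProduct, dotProduct_smul, smul_dotProduct,
        smul_eq_mul]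
      rw [hsym]; ring
    rw [← hexp]; exact h0
  have hd := discrim_le_zero key
  rw [discrim] at hd
  nlinarith [hd]

private lemma clm_apply_eq {m : ℕ} (L : EuclideanSpace ℝ (Fin m) →L[ℝ] ℝ)
    (v : EuclideanSpace ℝ (Fin m)) :
    L v = ∑ i, v i * L (EuclideanSpace.single i 1) := by
  have hv : v = ∑ i, v i • EuclideanSpace.single i 1 := by
    have h := (EuclideanSpace.basisFun (Fin m) ℝ).sum_repr v
    simp only [EuclideanSpace.basisFun_repr, EuclideanSpace.basisFun_apply] at h
    exact h.symm
  conv_lhs => rw [hv]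
  rw [map_sum]
  exact Finset.sum_congr rfl fun i _ => by rw [L.map_smul, smul_eq_mul]

private lemma sqrt_add_le' {a b : ℝ} (ha : 0 ≤ a) (hb : 0 ≤ b) :
    Real.sqrt (a + b) ≤ Real.sqrt a + Real.sqrt b := by
  have h1 := Real.sq_sqrt ha
  have h2 := Real.sq_sqrt hb
  have h3 := Real.sqrt_nonneg a
  have h4 := Real.sqrt_nonneg b
  have h5 : Real.sqrt (a + b) ≤ Real.sqrt ((Real.sqrt a + Real.sqrt b) ^ 2) :=
    Real.sqrt_le_sqrt (by nlinarith)
  rwa [Real.sqrt_sq (by positivity)] at h5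

private lemma gradNormSq_dot {n : ℕ} (G : RMetric n) (f : Pt n → ℝ) (x : Pt n) :
    gradNormSq G f x = (fun i => pd i f x) ⬝ᵥ (G.g x)⁻¹ *ᵥ (fun i => pd i f x) := by
  unfold gradNormSq ginv
  exact quad_eq_dot _ _ _

private lemma speed_sq {n : ℕ} (G : RMetric n) (γ : ℝ → Pt n) (t : ℝ) :
    (speed G γ t) ^ 2 = (fun i => deriv γ t i) ⬝ᵥ G.g (γ t) *ᵥ (fun i => deriv γ t i) := by
  have h0 : 0 ≤ (fun i => deriv γ t i) ⬝ᵥ G.g (γ t) *ᵥ (fun i => deriv γ t i) :=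
    psd_dot_nonneg (G.posdef _).posSemidef _
  rw [← quad_eq_dot] at h0 ⊢
  exact Real.sq_sqrt h0

private lemma path_estimate {n : ℕ} (G : RMetric n) (f : Pt n → ℝ)
    (hf : ContDiff ℝ (⊤ : ℕ∞) f) (hfnn : ∀ x, 0 ≤ f x)
    (hgr : ∀ x, gradNormSq G f x ≤ f x)
    (γ : ℝ → Pt n) (hγ : ContDiff ℝ 1 γ) :
    Real.sqrt (f (γ 1)) ≤ Real.sqrt (f (γ 0)) + (1/2) * pathLength G γ 0 1 := by
  classical
  have hγc : Continuous γ := hγ.continuous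
  have hvC : Continuous (deriv γ) := hγ.continuous_deriv le_rfl
  have hγd : ∀ t, HasDerivAt γ (deriv γ t) t := fun t =>
    ((hγ.differentiable one_ne_zero) t).hasDerivAt
  set D : ℝ → ℝ := fun t => ∑ i, pd i f (γ t) * deriv γ t i with hD
  have hpdC : ∀ i, Continuous (pd i f) := by
    intro i
    exact (hf.continuous_fderiv_apply (by simp)).comp
      (continuous_id.prodMk continuous_const)
  have hDC : Continuous D := by
    apply continuous_finset_sum
    intro i _
    exact ((hpdC i).comp hγc).mul ((continuous_apply i).comp ((PiLp.continuous_ofLp 2 _).comp hvC))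
  have hFd : ∀ t, HasDerivAt (fun s => f (γ s)) (D t) t := by
    intro t
    have h1 : HasFDerivAt f (fderiv ℝ f (γ t)) (γ t) :=
      ((hf.differentiable (by simp)) (γ t)).hasFDerivAt
    have h2 := h1.comp_hasDerivAt t (hγd t)
    have h3 : (fderiv ℝ f (γ t)) (deriv γ t) = D t := by
      rw [clm_apply_eq, hD]
      exact Finset.sum_congr rfl fun i _ => by rw [pd]; ring
    rw [h3] at h2
    exact h2
  have hsC : Continuous (speed G γ) := by
    unfold speed
    apply Real.continuous_sqrt.comp
    apply continuous_finset_sum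
    intro i _
    apply continuous_finset_sum
    intro j _
    exact (((G.smooth i j).continuous.comp hγc).mul
      ((continuous_apply i).comp ((PiLp.continuous_ofLp 2 _).comp hvC))).mul ((continuous_apply j).comp ((PiLp.continuous_ofLp 2 _).comp hvC))
  have hsnn : ∀ t, 0 ≤ speed G γ t := fun t => Real.sqrt_nonneg _
  have hDb : ∀ t, |D t| ≤ Real.sqrt (f (γ t)) * speed G γ t := by
    intro t
    have hpd : (G.g (γ t)).PosDef := G.posdef (γ t)
    have hdet : IsUnit (G.g (γ t)).det := isUnit_iff_ne_zero.mpr hpd.det_pos.ne'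
    have hAu : G.g (γ t) *ᵥ ((G.g (γ t))⁻¹ *ᵥ (fun i => pd i f (γ t)))
        = (fun i => pd i f (γ t)) := by
      rw [Matrix.mulVec_mulVec, Matrix.mul_nonsing_inv _ hdet, Matrix.one_mulVec]
    have hDt : D t = (fun i => deriv γ t i) ⬝ᵥ
        (G.g (γ t) *ᵥ ((G.g (γ t))⁻¹ *ᵥ (fun i => pd i f (γ t)))) := by
      rw [hAu]
      simp only [hD, dotProduct]
      exact Finset.sum_congr rfl fun i _ => mul_comm _ _
    have hgrad : ((G.g (γ t))⁻¹ *ᵥ (fun i => pd i f (γ t))) ⬝ᵥ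
        (G.g (γ t) *ᵥ ((G.g (γ t))⁻¹ *ᵥ (fun i => pd i f (γ t))))
        = gradNormSq G f (γ t) := by
      rw [hAu, dotProduct_comm, gradNormSq_dot]
    have hcs := cs_ineq hpd (fun i => deriv γ t i)
      ((G.g (γ t))⁻¹ *ᵥ (fun i => pd i f (γ t)))
    have hsq := speed_sq G γ t
    have h2 : (D t) ^ 2 ≤ f (γ t) * (speed G γ t) ^ 2 := by
      rw [hDt]
      calc ((fun i => deriv γ t i) ⬝ᵥ
            (G.g (γ t) *ᵥ ((G.g (γ t))⁻¹ *ᵥ (fun i => pd i f (γ t))))) ^ 2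
          ≤ ((fun i => deriv γ t i) ⬝ᵥ G.g (γ t) *ᵥ (fun i => deriv γ t i)) *
            (((G.g (γ t))⁻¹ *ᵥ (fun i => pd i f (γ t))) ⬝ᵥ
             (G.g (γ t) *ᵥ ((G.g (γ t))⁻¹ *ᵥ (fun i => pd i f (γ t))))) := hcs
        _ = (speed G γ t) ^ 2 * gradNormSq G f (γ t) := by rw [← hsq, hgrad]
        _ ≤ f (γ t) * (speed G γ t) ^ 2 := by
            have := hgr (γ t)
            nlinarith [sq_nonneg (speed G γ t)]
    have habs : |D t| = Real.sqrt ((D t) ^ 2) := (Real.sqrt_sq_eq_abs _).symm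
    rw [habs]
    calc Real.sqrt ((D t) ^ 2) ≤ Real.sqrt (f (γ t) * (speed G γ t) ^ 2) :=
          Real.sqrt_le_sqrt h2
      _ = Real.sqrt (f (γ t)) * speed G γ t := by
          rw [Real.sqrt_mul (hfnn (γ t)), Real.sqrt_sq (hsnn t)]
  -- ε-argument
  apply le_of_forall_pos_le_add
  intro ε hε
  have hepos : (0:ℝ) < ε ^ 2 := by positivity
  have hFpos : ∀ t : ℝ, 0 < f (γ t) + ε ^ 2 := fun t => by
    have := hfnn (γ t); linarith
  set φ : ℝ → ℝ := fun t => Real.sqrt (f (γ t) + ε ^ 2) with hφ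
  set φd : ℝ → ℝ := fun t => 1 / (2 * Real.sqrt (f (γ t) + ε ^ 2)) * D t with hφd'
  have hφd : ∀ t, HasDerivAt φ (φd t) t := by
    intro t
    have h1 : HasDerivAt (fun s => f (γ s) + ε ^ 2) (D t) t := (hFd t).add_const _
    have h2 := (Real.hasDerivAt_sqrt (hFpos t).ne').comp t h1
    exact h2
  have hφdC : Continuous φd := by
    rw [hφd']
    apply Continuous.mul _ hDC
    apply Continuous.div continuous_const
    · exact continuous_const.mul
        (Real.continuous_sqrt.comp ((hf.continuous.comp hγc).add continuous_const))
    · intro t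
      have := Real.sqrt_pos.mpr (hFpos t)
      positivity
  have heq : ∫ t in (0:ℝ)..1, φd t = φ 1 - φ 0 :=
    intervalIntegral.integral_eq_sub_of_hasDerivAt (fun t _ => hφd t)
      (hφdC.intervalIntegrable 0 1)
  have hle : ∫ t in (0:ℝ)..1, φd t ≤ ∫ t in (0:ℝ)..1, (1/2) * speed G γ t := by
    apply intervalIntegral.integral_mono_on (by norm_num)
      (hφdC.intervalIntegrable 0 1) ((continuous_const.mul hsC).intervalIntegrable 0 1)
    intro t _
    have hr : 0 < Real.sqrt (f (γ t) + ε ^ 2) := Real.sqrt_pos.mpr (hFpos t)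
    have h1 : |D t| ≤ Real.sqrt (f (γ t) + ε ^ 2) * speed G γ t :=
      (hDb t).trans (mul_le_mul_of_nonneg_right
        (Real.sqrt_le_sqrt (by linarith)) (hsnn t))
    calc φd t ≤ |φd t| := le_abs_self _
      _ = 1 / (2 * Real.sqrt (f (γ t) + ε ^ 2)) * |D t| := by
          rw [hφd', abs_mul, abs_of_pos (by positivity)]
      _ ≤ 1 / (2 * Real.sqrt (f (γ t) + ε ^ 2)) *
            (Real.sqrt (f (γ t) + ε ^ 2) * speed G γ t) :=
          mul_le_mul_of_nonneg_left h1 (by positivity)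
      _ = (1/2) * speed G γ t := by
          field_simp
  have hhalf : ∫ t in (0:ℝ)..1, (1/2) * speed G γ t = (1/2) * pathLength G γ 0 1 := by
    rw [pathLength, intervalIntegral.integral_const_mul]
  have h3 : φ 1 ≤ φ 0 + (1/2) * pathLength G γ 0 1 := by
    rw [heq, hhalf] at hle
    linarith
  have h4 : Real.sqrt (f (γ 1)) ≤ φ 1 := by
    show Real.sqrt (f (γ 1)) ≤ Real.sqrt (f (γ 1) + ε ^ 2)
    exact Real.sqrt_le_sqrt (by linarith)
  have h5 : φ 0 ≤ Real.sqrt (f (γ 0)) + ε := by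
    show Real.sqrt (f (γ 0) + ε ^ 2) ≤ _
    calc Real.sqrt (f (γ 0) + ε ^ 2) ≤ Real.sqrt (f (γ 0)) + Real.sqrt (ε ^ 2) :=
        sqrt_add_le' (hfnn _) hepos.le
      _ = Real.sqrt (f (γ 0)) + ε := by rw [Real.sqrt_sq hε.le]
  linarith

end AuxStmt3

/-- gradient bound `|∇f|(x) ≤ (1/2) r(x) + √(f(x₀))`. -/
theorem stmt3 (n : ℕ) (G : RMetric n) (f : Pt n → ℝ)
    (hcomp : IsCompleteMetric G) (hsol : IsSoliton G f) (hnorm : Normalized G f)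
    (hR : ∀ x, 0 ≤ scal G x) (x₀ : Pt n) :
    ∀ x : Pt n, Real.sqrt (gradNormSq G f x) ≤ (1/2) * rdist G x₀ x + Real.sqrt (f x₀) := by
  intro x
  have hf : ContDiff ℝ (⊤ : ℕ∞) f := hsol.1
  have hgnn : ∀ y, 0 ≤ gradNormSq G f y := by
    intro y
    rw [gradNormSq_dot]
    exact psd_dot_nonneg ((G.posdef y).inv).posSemidef _
  have hfnn : ∀ y, 0 ≤ f y := fun y => by
    have h := hnorm y; have := hR y; have := hgnn y; linarith
  have hgr : ∀ y, gradNormSq G f y ≤ f y := fun y => by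
    have h := hnorm y; have := hR y; linarith
  have h1 : Real.sqrt (gradNormSq G f x) ≤ Real.sqrt (f x) :=
    Real.sqrt_le_sqrt (hgr x)
  have h2 : 2 * (Real.sqrt (f x) - Real.sqrt (f x₀)) ≤ rdist G x₀ x := by
    rw [rdist]
    apply le_csInf
    · refine ⟨pathLength G (fun t => x₀ + t • (x - x₀)) 0 1,
        fun t => x₀ + t • (x - x₀), ?_, ?_, ?_, rfl⟩
      · exact contDiff_const.add (contDiff_id.smul contDiff_const)
      · simp
      · simp
    · rintro L ⟨γ, hγ, hs, he, rfl⟩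
      have hest := path_estimate G f hf hfnn hgr γ hγ
      rw [hs, he] at hest
      linarith
  linarith
end
end

section
/- Let (M, g, f) satisfy Ric + Hess f = (1/2)g with R + |∇f|² = f and R ≥ 0. Then the scalar curvature satisfies R(x) ≤ (1/4)(r(x) + 2√(f(x₀)))² for all x ∈ M. -/
open MeasureTheory Matrix Set

noncomputable section

variable {n : ℕ}

variable (G : RMetric n)

namespace Stmt4Aux

variable {n : ℕ}

lemma sum_single_eq (v : EuclideanSpace ℝ (Fin n)) :
    ∑ i, v i • (EuclideanSpace.single i (1:ℝ)) = v := by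
  ext j
  rw [show ((∑ i, v i • (EuclideanSpace.single i (1:ℝ)))) j
      = ∑ i, (v i • (EuclideanSpace.single i (1:ℝ))) j by rw [WithLp.ofLp_sum]; exact Finset.sum_apply j _ _]
  simp [EuclideanSpace.single_apply]

lemma fderiv_eq_sum (F : Pt n → ℝ) (x : Pt n) (v : EuclideanSpace ℝ (Fin n)) :
    fderiv ℝ F x v = ∑ i, v i * pd i F x := by
  conv_lhs => rw [← sum_single_eq v]
  rw [map_sum]
  simp [pd, smul_eq_mul]

lemma sum_eq_dot (M : Matrix (Fin n) (Fin n) ℝ) (u v : Fin n → ℝ) :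
    ∑ i, ∑ j, M i j * u i * v j = u ⬝ᵥ M.mulVec v := by
  simp only [dotProduct, Matrix.mulVec, Finset.mul_sum]
  exact Finset.sum_congr rfl fun i _ => Finset.sum_congr rfl fun j _ => by ring

lemma dot_symm {A : Matrix (Fin n) (Fin n) ℝ} (hA : A.PosSemidef) (u v : Fin n → ℝ) :
    u ⬝ᵥ A.mulVec v = v ⬝ᵥ A.mulVec u := by
  have ht : Aᵀ = A := by
    have := hA.1.eq
    simpa [Matrix.IsHermitian, Matrix.conjTranspose_eq_transpose_of_trivial] using this
  rw [Matrix.dotProduct_mulVec, ← Matrix.mulVec_transpose, ht]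
  exact dotProduct_comm _ _

lemma dot_nonneg {A : Matrix (Fin n) (Fin n) ℝ} (hA : A.PosSemidef) (v : Fin n → ℝ) :
    0 ≤ v ⬝ᵥ A.mulVec v := by
  simpa using hA.dotProduct_mulVec_nonneg v

lemma cs {A : Matrix (Fin n) (Fin n) ℝ} (hA : A.PosSemidef) (u v : Fin n → ℝ) :
    (u ⬝ᵥ A.mulVec v)^2 ≤ (u ⬝ᵥ A.mulVec u) * (v ⬝ᵥ A.mulVec v) := by
  set a := v ⬝ᵥ A.mulVec v
  set b := 2 * (u ⬝ᵥ A.mulVec v)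
  set c := u ⬝ᵥ A.mulVec u
  have key : ∀ t : ℝ, 0 ≤ a * (t * t) + b * t + c := by
    intro t
    have h0 : 0 ≤ (u + t • v) ⬝ᵥ A.mulVec (u + t • v) := dot_nonneg hA _
    have hexp : (u + t • v) ⬝ᵥ A.mulVec (u + t • v) = a * (t * t) + b * t + c := by
      rw [Matrix.mulVec_add, Matrix.mulVec_smul]
      rw [add_dotProduct, smul_dotProduct]
      rw [dotProduct_add, dotProduct_add, dotProduct_smul,
        dotProduct_smul]
      have hs : v ⬝ᵥ A.mulVec u = u ⬝ᵥ A.mulVec v := dot_symm hA v u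
      simp only [smul_eq_mul, hs, a, b, c]
      ring
    linarith [hexp ▸ h0]
  have hd := discrim_le_zero key
  have h2 : (2 * (u ⬝ᵥ A.mulVec v)) ^ 2 - 4 * a * c ≤ 0 := by simpa [discrim, b] using hd
  nlinarith [h2]

end Stmt4Aux

open Stmt4Aux in
lemma stmt4_grad_bound (G : RMetric n) (f : Pt n → ℝ)
    (hgrad : ∀ y, gradNormSq G f y ≤ f y)
    (x : Pt n) (v : EuclideanSpace ℝ (Fin n)) :
    fderiv ℝ f x v ≤ Real.sqrt (f x) *
      Real.sqrt (∑ i, ∑ j, G.g x i j * v i * v j) := by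
  classical
  set d : Fin n → ℝ := fun i => pd i f x with hd
  have hpd : (G.g x).PosDef := G.posdef x
  have hinv : ((G.g x)⁻¹).PosSemidef := hpd.posSemidef.inv
  have hgud : IsUnit (G.g x).det := hpd.det_pos.ne'.isUnit
  have hS : (∑ i, ∑ j, G.g x i j * v i * v j) = (v : Fin n → ℝ) ⬝ᵥ (G.g x).mulVec v := by
    rw [sum_eq_dot]
  have hQ : gradNormSq G f x = d ⬝ᵥ ((G.g x)⁻¹).mulVec d := by
    rw [gradNormSq, ← sum_eq_dot]
    exact Finset.sum_congr rfl fun i _ => Finset.sum_congr rfl fun j _ => by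
      rw [ginv]
  have hQnn : 0 ≤ d ⬝ᵥ ((G.g x)⁻¹).mulVec d := dot_nonneg hinv d
  have hSnn : 0 ≤ (v : Fin n → ℝ) ⬝ᵥ (G.g x).mulVec v := dot_nonneg hpd.posSemidef v
  -- fderiv f x v = d ⬝ᵥ v
  have hfd : fderiv ℝ f x v = d ⬝ᵥ (v : Fin n → ℝ) := by
    rw [fderiv_eq_sum]
    simp only [dotProduct]
    exact Finset.sum_congr rfl fun i _ => by rw [mul_comm]
  -- d ⬝ᵥ v = d ⬝ᵥ g⁻¹ (g v)
  have hdv : d ⬝ᵥ (v : Fin n → ℝ) = d ⬝ᵥ ((G.g x)⁻¹).mulVec ((G.g x).mulVec v) := by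
    rw [Matrix.mulVec_mulVec, Matrix.nonsing_inv_mul _ hgud, Matrix.one_mulVec]
  have hcs := cs hinv d ((G.g x).mulVec v)
  have hsecond : ((G.g x).mulVec v) ⬝ᵥ ((G.g x)⁻¹).mulVec ((G.g x).mulVec v)
      = (v : Fin n → ℝ) ⬝ᵥ (G.g x).mulVec v := by
    rw [Matrix.mulVec_mulVec, Matrix.nonsing_inv_mul _ hgud, Matrix.one_mulVec]
    exact dotProduct_comm _ _
  rw [hsecond] at hcs
  -- conclude
  have h1 : fderiv ℝ f x v ≤ Real.sqrt (gradNormSq G f x) *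
      Real.sqrt ((v : Fin n → ℝ) ⬝ᵥ (G.g x).mulVec v) := by
    rw [hfd, hdv]
    calc d ⬝ᵥ ((G.g x)⁻¹).mulVec ((G.g x).mulVec v)
        ≤ |d ⬝ᵥ ((G.g x)⁻¹).mulVec ((G.g x).mulVec v)| := le_abs_self _
      _ = Real.sqrt ((d ⬝ᵥ ((G.g x)⁻¹).mulVec ((G.g x).mulVec v))^2) :=
          (Real.sqrt_sq_eq_abs _).symm
      _ ≤ Real.sqrt ((d ⬝ᵥ ((G.g x)⁻¹).mulVec d) * ((v : Fin n → ℝ) ⬝ᵥ (G.g x).mulVec v)) :=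
          Real.sqrt_le_sqrt hcs
      _ = Real.sqrt (gradNormSq G f x) *
          Real.sqrt ((v : Fin n → ℝ) ⬝ᵥ (G.g x).mulVec v) := by
          rw [hQ, Real.sqrt_mul hQnn]
  refine h1.trans ?_
  rw [hS]
  have := Real.sqrt_le_sqrt (hgrad x)
  exact mul_le_mul_of_nonneg_right this (Real.sqrt_nonneg _)

lemma stmt4_sqrt_lip (G : RMetric n) (f : Pt n → ℝ) (hf : ContDiff ℝ (⊤ : ℕ∞) f)
    (hf0 : ∀ y, 0 ≤ f y) (hgrad : ∀ y, gradNormSq G f y ≤ f y)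
    (γ : ℝ → Pt n) (hγ : ContDiff ℝ 1 γ) :
    Real.sqrt (f (γ 1)) ≤ Real.sqrt (f (γ 0)) + (1/2) * pathLength G γ 0 1 := by
  set F : ℝ → ℝ := fun t => f (γ t) with hF
  have hFc : ContDiff ℝ 1 F := (hf.of_le (by simp)).comp hγ
  have hγd : Differentiable ℝ γ := hγ.differentiable one_ne_zero
  have hDd : ∀ t, HasDerivAt F (fderiv ℝ f (γ t) (deriv γ t)) t := fun t =>
    ((hf.differentiable (by simp) (γ t)).hasFDerivAt).comp_hasDerivAt t (hγd t).hasDerivAt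
  set D : ℝ → ℝ := fun t => fderiv ℝ f (γ t) (deriv γ t) with hD
  have hDeq : deriv F = D := funext fun t => (hDd t).deriv
  have hDc : Continuous D := hDeq ▸ hFc.continuous_deriv le_rfl
  -- continuity of speed
  have hderivc : Continuous (deriv γ) := hγ.continuous_deriv le_rfl
  have hspeedc : Continuous (speed G γ) := by
    apply Real.continuous_sqrt.comp
    apply continuous_finset_sum _ fun i _ => ?_
    apply continuous_finset_sum _ fun j _ => ?_
    exact (((G.smooth i j).continuous.comp hγ.continuous).mul
        ((PiLp.continuous_apply 2 _ i).comp hderivc)).mul ((PiLp.continuous_apply 2 _ j).comp hderivc)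
  have hsnn : ∀ t, 0 ≤ speed G γ t := fun t => Real.sqrt_nonneg _
  -- pointwise bound D t ≤ sqrt (F t) * speed t
  have hDb : ∀ t, D t ≤ Real.sqrt (F t) * speed G γ t := by
    intro t
    have := stmt4_grad_bound G f hgrad (γ t) (deriv γ t)
    simpa [speed, hD, hF] using this
  -- epsilon argument
  have key : ∀ ε : ℝ, 0 < ε →
      Real.sqrt (F 1 + ε) ≤ Real.sqrt (F 0 + ε) + (1/2) * pathLength G γ 0 1 := by
    intro ε hε
    set φ : ℝ → ℝ := fun t => Real.sqrt (F t + ε) with hφ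
    have hFε : ∀ t, (0:ℝ) < F t + ε := fun t => by
      have := hf0 (γ t); simp only [hF]; linarith
    have hφd : ∀ t, HasDerivAt φ (D t / (2 * Real.sqrt (F t + ε))) t := by
      intro t
      have h1 : HasDerivAt (fun s => F s + ε) (D t) t := (hDd t).add_const ε
      have h2 := (Real.hasDerivAt_sqrt (hFε t).ne').comp t h1
      simpa [div_eq_mul_inv, mul_comm, hφ, Function.comp_def] using h2
    have hφ'c : Continuous (fun t => D t / (2 * Real.sqrt (F t + ε))) := by
      apply hDc.div
      · exact continuous_const.mul (Real.continuous_sqrt.comp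
          ((hFc.continuous).add continuous_const))
      · intro t
        have h := Real.sqrt_pos.2 (hFε t)
        exact ne_of_gt (by linarith)
    have hint : φ 1 - φ 0 = ∫ t in (0:ℝ)..1, D t / (2 * Real.sqrt (F t + ε)) := by
      refine (intervalIntegral.integral_eq_sub_of_hasDerivAt (fun t _ => hφd t)
        (hφ'c.intervalIntegrable _ _)).symm
    have hmono : (∫ t in (0:ℝ)..1, D t / (2 * Real.sqrt (F t + ε)))
        ≤ ∫ t in (0:ℝ)..1, (1/2) * speed G γ t := by
      apply intervalIntegral.integral_mono_on (by norm_num)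
        (hφ'c.intervalIntegrable _ _)
        ((continuous_const.mul hspeedc).intervalIntegrable _ _)
      intro t _
      have hc : (0:ℝ) < Real.sqrt (F t + ε) := Real.sqrt_pos.2 (hFε t)
      have h1 : D t ≤ Real.sqrt (F t + ε) * speed G γ t := by
        refine (hDb t).trans (mul_le_mul_of_nonneg_right ?_ (hsnn t))
        exact Real.sqrt_le_sqrt (by linarith)
      rw [div_le_iff₀ (by positivity)]
      calc D t ≤ Real.sqrt (F t + ε) * speed G γ t := h1
        _ = 1/2 * speed G γ t * (2 * Real.sqrt (F t + ε)) := by ring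
    have hpl : (∫ t in (0:ℝ)..1, (1/2) * speed G γ t) = (1/2) * pathLength G γ 0 1 := by
      rw [pathLength, ← intervalIntegral.integral_const_mul]
    have : φ 1 - φ 0 ≤ (1/2) * pathLength G γ 0 1 := by
      rw [hint, ← hpl]; exact hmono
    simpa [hφ] using by linarith [this]
  refine le_of_forall_pos_le_add ?_
  intro δ hδ
  have h1 := key (δ^2) (by positivity)
  have h2 : Real.sqrt (F 1) ≤ Real.sqrt (F 1 + δ^2) :=
    Real.sqrt_le_sqrt (le_add_of_nonneg_right (by positivity))
  have h3 : Real.sqrt (F 0 + δ^2) ≤ Real.sqrt (F 0) + δ := by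
    rw [show Real.sqrt (F 0) + δ = Real.sqrt (F 0) + Real.sqrt (δ^2) by
      rw [Real.sqrt_sq hδ.le]]
    have ha := hf0 (γ 0)
    have hb : (0:ℝ) ≤ δ^2 := by positivity
    have := Real.sq_sqrt (show (0:ℝ) ≤ F 0 from ha)
    have := Real.sq_sqrt hb
    nlinarith [Real.sqrt_nonneg (F 0), Real.sqrt_nonneg (δ^2),
      Real.sq_sqrt (show (0:ℝ) ≤ F 0 + δ^2 by positivity),
      Real.sqrt_nonneg (F 0 + δ^2), mul_nonneg (Real.sqrt_nonneg (F 0)) (Real.sqrt_nonneg (δ^2))]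
  calc Real.sqrt (F 1) ≤ Real.sqrt (F 1 + δ^2) := h2
    _ ≤ Real.sqrt (F 0 + δ^2) + (1/2) * pathLength G γ 0 1 := h1
    _ ≤ Real.sqrt (F 0) + (1/2) * pathLength G γ 0 1 + δ := by linarith

/-- scalar curvature bound `R(x) ≤ (1/4)(r(x) + 2√(f(x₀)))²`. -/
theorem stmt4 (n : ℕ) (G : RMetric n) (f : Pt n → ℝ)
    (hcomp : IsCompleteMetric G) (hsol : IsSoliton G f) (hnorm : Normalized G f)
    (hR : ∀ x, 0 ≤ scal G x) (x₀ : Pt n) :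
    ∀ x : Pt n, scal G x ≤ (1/4) * (rdist G x₀ x + 2 * Real.sqrt (f x₀))^2 := by
  intro x
  classical
  -- basic positivity facts
  have gradnn : ∀ y, 0 ≤ gradNormSq G f y := by
    intro y
    have hpd : ((G.g y)⁻¹).PosSemidef := (G.posdef y).posSemidef.inv
    have := Stmt4Aux.dot_nonneg hpd (fun i => pd i f y)
    rw [gradNormSq, Stmt4Aux.sum_eq_dot]
    · convert this using 2 <;> rfl
  have hf0 : ∀ y, 0 ≤ f y := by
    intro y
    have h1 := hnorm y
    have := hR y
    linarith [gradnn y]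
  have hgrad : ∀ y, gradNormSq G f y ≤ f y := by
    intro y
    have h1 := hnorm y
    have := hR y
    linarith
  -- lengths are nonnegative
  have hLnn : ∀ L ∈ {L | ∃ γ : ℝ → Pt n, ContDiff ℝ 1 γ ∧ γ 0 = x₀ ∧ γ 1 = x ∧
      L = pathLength G γ 0 1}, 0 ≤ L := by
    rintro L ⟨γ, hγ, h0, h1, rfl⟩
    exact intervalIntegral.integral_nonneg (by norm_num) fun t _ => Real.sqrt_nonneg _
  -- the set of path lengths is nonempty (straight line)
  have hne : {L | ∃ γ : ℝ → Pt n, ContDiff ℝ 1 γ ∧ γ 0 = x₀ ∧ γ 1 = x ∧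
      L = pathLength G γ 0 1}.Nonempty := by
    refine ⟨pathLength G (fun t => x₀ + t • (x - x₀)) 0 1,
      fun t => x₀ + t • (x - x₀), ?_, by simp, by simp, rfl⟩
    exact contDiff_const.add (contDiff_id.smul contDiff_const)
  -- key estimate: sqrt f is (1/2)-Lipschitz w.r.t. rdist
  have hkey : 2 * (Real.sqrt (f x) - Real.sqrt (f x₀)) ≤ rdist G x₀ x := by
    rw [rdist]
    apply le_csInf hne
    rintro L ⟨γ, hγ, h0, h1, rfl⟩
    have := stmt4_sqrt_lip G f hsol.1 hf0 hgrad γ hγ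
    rw [h0, h1] at this
    linarith
  have hrnn : 0 ≤ rdist G x₀ x := by rw [rdist]; exact Real.sInf_nonneg hLnn
  -- finish
  have hscal : scal G x ≤ f x := by
    have h1 := hnorm x
    have h2 := hgrad x
    linarith [gradnn x]
  have hs : Real.sqrt (f x) ^ 2 = f x := Real.sq_sqrt (hf0 x)
  have hsx0 : 0 ≤ Real.sqrt (f x₀) := Real.sqrt_nonneg _
  have hsx : 0 ≤ Real.sqrt (f x) := Real.sqrt_nonneg _
  nlinarith [hkey, hs, hscal, hrnn, hsx0, hsx]
end
end

section
/- Let V, χ : (0, ∞) → ℝ be differentiable with V > 0, χ ≥ 0 nondecreasing, satisfying n·V(r) − r·V'(r) = 2χ(r) − (4/r)χ'(r) for all r > 0. Then (r^{−n} V(r))' = 4 r^{−n−2} χ'(r) − 2 r^{−n−1} χ(r), and for r ≥ r₀ = √(2(n+2)), r^{−n}V(r) − r₀^{−n}V(r₀) ≤ 4r^{−n−2}(χ(r) − χ(r₀)) + (2/n)χ(r₀)(r^{−n} − r₀^{−n}). -/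
open MeasureTheory Matrix Set

noncomputable section

variable {n : ℕ}

variable (G : RMetric n)

/-- the ODE identity `(r^{-n}V(r))' = 4r^{-n-2}χ'(r) - 2r^{-n-1}χ(r)`
and the integrated inequality for `r ≥ r₀ = √(2(n+2))`. -/
theorem stmt12 (n : ℝ) (hn : 1 ≤ n) (V χ : ℝ → ℝ)
    (hV : ∀ r : ℝ, 0 < r → DifferentiableAt ℝ V r)
    (hχ : ∀ r : ℝ, 0 < r → DifferentiableAt ℝ χ r)
    (hVpos : ∀ r : ℝ, 0 < r → 0 < V r)
    (hχ0 : ∀ r : ℝ, 0 < r → 0 ≤ χ r)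
    (hχmono : ∀ r s : ℝ, 0 < r → r ≤ s → χ r ≤ χ s)
    (hode : ∀ r : ℝ, 0 < r → n * V r - r * deriv V r = 2 * χ r - (4/r) * deriv χ r) :
    (∀ r : ℝ, 0 < r →
      deriv (fun s : ℝ => s ^ (-n) * V s) r
        = 4 * r ^ (-n - 2) * deriv χ r - 2 * r ^ (-n - 1) * χ r)
    ∧ (∀ r : ℝ, Real.sqrt (2*(n+2)) ≤ r →
      r ^ (-n) * V r - Real.sqrt (2*(n+2)) ^ (-n) * V (Real.sqrt (2*(n+2)))
        ≤ 4 * r ^ (-n - 2) * (χ r - χ (Real.sqrt (2*(n+2))))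
          + (2/n) * χ (Real.sqrt (2*(n+2))) * (r ^ (-n) - Real.sqrt (2*(n+2)) ^ (-n))) := by
  have hnpos : (0:ℝ) < n := by linarith
  have hFd : ∀ r : ℝ, 0 < r → HasDerivAt (fun s : ℝ => s ^ (-n) * V s)
      (4 * r ^ (-n - 2) * deriv χ r - 2 * r ^ (-n - 1) * χ r) r := by
    intro r hr
    have hr0 : r ≠ 0 := ne_of_gt hr
    have h1 : HasDerivAt (fun s : ℝ => s ^ (-n)) (-n * r ^ (-n - 1)) r :=
      Real.hasDerivAt_rpow_const (Or.inl hr0)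
    have h2 := h1.mul (hV r hr).hasDerivAt
    have hode' : n * r * V r - r ^ 2 * deriv V r = 2 * r * χ r - 4 * deriv χ r := by
      have h := hode r hr
      field_simp at h
      linear_combination h
    have e1 : r ^ (-n) = r ^ (-n - 1) * r := by
      have := Real.rpow_add_one hr0 (-n - 1)
      rw [show (-n - 1 + 1 : ℝ) = -n by ring] at this; exact this
    have e2 : r ^ (-n - 1) = r ^ (-n - 2) * r := by
      have := Real.rpow_add_one hr0 (-n - 2)
      rw [show (-n - 2 + 1 : ℝ) = -n - 1 by ring] at this; exact this
    have heq : -n * r ^ (-n - 1) * V r + r ^ (-n) * deriv V r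
        = 4 * r ^ (-n - 2) * deriv χ r - 2 * r ^ (-n - 1) * χ r := by
      rw [e1, e2]
      linear_combination (-(r ^ (-n - 2))) * hode'
    exact heq ▸ h2
  refine ⟨fun r hr => (hFd r hr).deriv, ?_⟩
  intro r hr
  set r₀ : ℝ := Real.sqrt (2*(n+2)) with hr₀def
  have hr₀pos : 0 < r₀ := Real.sqrt_pos.mpr (by linarith)
  have hsq : r₀ ^ 2 = 2*(n+2) := Real.sq_sqrt (by linarith)
  set Gf : ℝ → ℝ := fun s => s ^ (-n) * V s - 4 * s ^ (-n-2) * (χ s - χ r₀)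
      - (2/n) * χ r₀ * s ^ (-n) with hGdef
  have hGd : ∀ s : ℝ, 0 < s → HasDerivAt Gf
      (2 * s ^ (-n-3) * (χ s - χ r₀) * (2*(n+2) - s^2)) s := by
    intro s hs
    have hs0 : s ≠ 0 := ne_of_gt hs
    have e2 : s ^ (-n - 1) = s ^ (-n - 2) * s := by
      have := Real.rpow_add_one hs0 (-n - 2)
      rw [show (-n - 2 + 1 : ℝ) = -n - 1 by ring] at this; exact this
    have e3 : s ^ (-n - 2) = s ^ (-n - 3) * s := by
      have := Real.rpow_add_one hs0 (-n - 3)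
      rw [show (-n - 3 + 1 : ℝ) = -n - 2 by ring] at this; exact this
    have hT2a : HasDerivAt (fun u : ℝ => 4 * u ^ (-n-2)) (4 * ((-n-2) * s ^ (-n-2-1))) s :=
      (Real.hasDerivAt_rpow_const (Or.inl hs0)).const_mul 4
    have hT2b : HasDerivAt (fun u : ℝ => χ u - χ r₀) (deriv χ s) s :=
      (hχ s hs).hasDerivAt.sub_const (χ r₀)
    have hT3 : HasDerivAt (fun u : ℝ => (2/n) * χ r₀ * u ^ (-n))
        ((2/n) * χ r₀ * (-n * s ^ (-n-1))) s :=
      (Real.hasDerivAt_rpow_const (Or.inl hs0)).const_mul ((2/n) * χ r₀)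
    have h := ((hFd s hs).sub (hT2a.mul hT2b)).sub hT3
    have heq : 4 * s ^ (-n - 2) * deriv χ s - 2 * s ^ (-n - 1) * χ s -
        (4 * ((-n-2) * s ^ (-n-2-1)) * (χ s - χ r₀) + 4 * s ^ (-n-2) * deriv χ s) -
        (2/n) * χ r₀ * (-n * s ^ (-n-1))
        = 2 * s ^ (-n-3) * (χ s - χ r₀) * (2*(n+2) - s^2) := by
      rw [show (-n - 2 - 1 : ℝ) = -n - 3 by ring, e2, e3]
      field_simp
      ring
    exact heq ▸ h
  have hant : AntitoneOn Gf (Ici r₀) := by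
    apply antitoneOn_of_deriv_nonpos (convex_Ici r₀)
    · intro s hs
      exact ((hGd s (lt_of_lt_of_le hr₀pos hs)).differentiableAt).continuousAt.continuousWithinAt
    · intro s hs
      rw [interior_Ici] at hs
      exact (hGd s (lt_trans hr₀pos hs)).differentiableAt.differentiableWithinAt
    · intro s hs
      rw [interior_Ici] at hs
      have hspos : 0 < s := lt_trans hr₀pos hs
      rw [(hGd s hspos).deriv]
      have h1 : (0:ℝ) ≤ χ s - χ r₀ := sub_nonneg.mpr (hχmono r₀ s hr₀pos hs.le)
      have h2 : 2*(n+2) - s^2 ≤ 0 := by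
        have : r₀ ^ 2 ≤ s ^ 2 := pow_le_pow_left₀ hr₀pos.le hs.le 2
        linarith [hsq]
      have h3 : (0:ℝ) < s ^ (-n-3) := Real.rpow_pos_of_pos hspos _
      exact mul_nonpos_of_nonneg_of_nonpos
        (mul_nonneg (mul_nonneg (by norm_num) h3.le) h1) h2
  have hle : Gf r ≤ Gf r₀ := hant self_mem_Ici hr hr
  simp only [hGdef] at hle
  have key : r ^ (-n) * V r - r₀ ^ (-n) * V r₀
      - (4 * r ^ (-n - 2) * (χ r - χ r₀) + (2/n) * χ r₀ * (r ^ (-n) - r₀ ^ (-n)))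
      = (r ^ (-n) * V r - 4 * r ^ (-n-2) * (χ r - χ r₀) - (2/n) * χ r₀ * r ^ (-n))
      - (r₀ ^ (-n) * V r₀ - 4 * r₀ ^ (-n-2) * (χ r₀ - χ r₀) - (2/n) * χ r₀ * r₀ ^ (-n)) := by
    ring
  linarith [hle, key]
end
end

section
/- Let n ≥ 1 and let V, χ : (0, ∞) → ℝ be differentiable with V > 0, χ nonnegative and nondecreasing, satisfying n·V(r) − r·V'(r) = 2χ(r) − (4/r)χ'(r) and χ(r) ≤ (n/2)V(r) for all r. Then there exists C > 0 with V(r) ≤ C rⁿ for all r ≥ √(2(n+2)) sufficiently large (e.g., r ≥ max(√(2(n+2)), 4√n) gives V(r) ≤ 2 r₀^{−n} V(r₀) rⁿ). -/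
open MeasureTheory Matrix Set

noncomputable section

variable {n : ℕ}

variable (G : RMetric n)

/-- the abstract Euclidean-growth lemma: from the ODE identity and
`χ ≤ (n/2)V` one gets `V(r) ≤ C rⁿ` for all large `r`
(e.g. `r ≥ max(√(2(n+2)), 4√n)`). -/
theorem stmt13 (n : ℝ) (hn : 1 ≤ n) (V χ : ℝ → ℝ)
    (hV : ∀ r : ℝ, 0 < r → DifferentiableAt ℝ V r)
    (hχ : ∀ r : ℝ, 0 < r → DifferentiableAt ℝ χ r)
    (hVpos : ∀ r : ℝ, 0 < r → 0 < V r)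
    (hχ0 : ∀ r : ℝ, 0 < r → 0 ≤ χ r)
    (hχmono : ∀ r s : ℝ, 0 < r → r ≤ s → χ r ≤ χ s)
    (hode : ∀ r : ℝ, 0 < r → n * V r - r * deriv V r = 2 * χ r - (4/r) * deriv χ r)
    (hbound : ∀ r : ℝ, 0 < r → χ r ≤ (n/2) * V r) :
    ∃ C : ℝ, 0 < C ∧ ∀ r : ℝ,
      max (Real.sqrt (2*(n+2))) (4 * Real.sqrt n) ≤ r → V r ≤ C * r ^ n := by
  set r0 : ℝ := max (Real.sqrt (2*(n+2))) (4 * Real.sqrt n) with hr0def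
  have hn0 : (0:ℝ) < n := lt_of_lt_of_le one_pos hn
  have hsq1 : (1:ℝ) ≤ Real.sqrt n := by
    rw [show (1:ℝ) = Real.sqrt 1 by simp]
    exact Real.sqrt_le_sqrt hn
  have hr0pos : 0 < r0 := lt_of_lt_of_le (by linarith) (le_max_right _ _)
  set F : ℝ → ℝ := fun r => V r * r ^ (-n) - 4 * χ r * r ^ (-(n+2)) with hFdef
  have hFderiv : ∀ r : ℝ, 0 < r → HasDerivAt F
      (deriv V r * r ^ (-n) + V r * (-n * r ^ (-n - 1))
        - (4 * deriv χ r * r ^ (-(n+2)) + 4 * χ r * (-(n+2) * r ^ (-(n+2) - 1)))) r := by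
    intro r hr
    have h1 : HasDerivAt (fun s : ℝ => s ^ (-n)) (-n * r ^ (-n - 1)) r :=
      Real.hasDerivAt_rpow_const (Or.inl hr.ne')
    have h2 : HasDerivAt (fun s : ℝ => s ^ (-(n+2))) (-(n+2) * r ^ (-(n+2) - 1)) r :=
      Real.hasDerivAt_rpow_const (Or.inl hr.ne')
    exact ((hV r hr).hasDerivAt.mul h1).sub
      (((hχ r hr).hasDerivAt.const_mul 4).mul h2)
  have hderiv_nonpos : ∀ r : ℝ, r0 ≤ r → deriv F r ≤ 0 := by
    intro r hr
    have hrpos : 0 < r := lt_of_lt_of_le hr0pos hr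
    rw [(hFderiv r hrpos).deriv]
    have hrsq : 2*(n+2) ≤ r^2 := by
      have hle : Real.sqrt (2*(n+2)) ≤ r := le_trans (le_max_left _ _) hr
      have h2 : (0:ℝ) ≤ 2*(n+2) := by linarith
      nlinarith [Real.sq_sqrt h2, Real.sqrt_nonneg (2*(n+2))]
    set a := r ^ (-(n+3)) with ha
    have hapos : 0 < a := Real.rpow_pos_of_pos hrpos _
    have e1 : r ^ (-n) = a * r ^ 3 := by
      rw [ha, ← Real.rpow_natCast r 3, ← Real.rpow_add hrpos]
      congr 1; push_cast; ring
    have e2 : r ^ (-n - 1) = a * r ^ 2 := by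
      rw [ha, ← Real.rpow_natCast r 2, ← Real.rpow_add hrpos]
      congr 1; push_cast; ring
    have e3 : r ^ (-(n+2)) = a * r := by
      rw [ha, show (-(n+2)) = (-(n+3)) + 1 by ring, Real.rpow_add hrpos, Real.rpow_one]
    have e4 : r ^ (-(n+2) - 1) = a := by
      rw [ha, show (-(n+2) - 1) = (-(n+3)) by ring]
    have hode2 : r * (n * V r - r * deriv V r) = 2 * χ r * r - 4 * deriv χ r := by
      rw [hode r hrpos]
      field_simp
    rw [e1, e2, e3, e4]
    have key : deriv V r * (a * r ^ 3) + V r * (-n * (a * r ^ 2))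
        - (4 * deriv χ r * (a * r) + 4 * χ r * (-(n+2) * a))
        = a * (χ r * (4*(n+2) - 2*r^2)) := by
      linear_combination (-(a*r)) * hode2
    rw [key]
    nlinarith [mul_nonneg hapos.le (hχ0 r hrpos), hrsq]
  have hFanti : AntitoneOn F (Ici r0) := by
    apply antitoneOn_of_deriv_nonpos (convex_Ici r0)
    · intro x hx
      exact ((hFderiv x (lt_of_lt_of_le hr0pos hx)).differentiableAt.continuousAt).continuousWithinAt
    · intro x hx
      rw [interior_Ici] at hx
      exact (hFderiv x (lt_of_lt_of_le hr0pos hx.le)).differentiableAt.differentiableWithinAt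
    · intro x hx
      rw [interior_Ici] at hx
      exact hderiv_nonpos x hx.le
  have hC : 0 < 2 * V r0 / r0 ^ n :=
    div_pos (by linarith [hVpos r0 hr0pos]) (Real.rpow_pos_of_pos hr0pos n)
  refine ⟨2 * V r0 / r0 ^ n, hC, ?_⟩
  intro r hr
  have hrpos : 0 < r := lt_of_lt_of_le hr0pos hr
  have h1 : V r * r ^ (-n) - 4 * χ r * r ^ (-(n+2))
      ≤ V r0 * r0 ^ (-n) - 4 * χ r0 * r0 ^ (-(n+2)) :=
    hFanti self_mem_Ici hr hr
  have h2 : 0 ≤ 4 * χ r0 * r0 ^ (-(n+2)) :=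
    mul_nonneg (mul_nonneg (by norm_num) (hχ0 r0 hr0pos)) (Real.rpow_pos_of_pos hr0pos _).le
  have hr2 : 16 * n ≤ r ^ 2 := by
    have hle : 4 * Real.sqrt n ≤ r := le_trans (le_max_right _ _) hr
    nlinarith [Real.sq_sqrt hn0.le, Real.sqrt_nonneg n]
  have h8 : 8 * χ r ≤ V r * r ^ 2 := by
    have hb := hbound r hrpos
    have hVr := (hVpos r hrpos).le
    nlinarith [mul_nonneg hVr (by linarith : (0:ℝ) ≤ r ^ 2 - 4 * n)]
  have e : r ^ (-n) = r ^ (-(n+2)) * r ^ 2 := by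
    rw [← Real.rpow_natCast r 2, ← Real.rpow_add hrpos]
    congr 1; push_cast; ring
  have hq : 0 < r ^ (-(n+2)) := Real.rpow_pos_of_pos hrpos _
  have h3 : 4 * χ r * r ^ (-(n+2)) ≤ (1/2) * (V r * r ^ (-n)) := by
    rw [e]
    nlinarith [mul_nonneg hq.le (sub_nonneg.mpr h8)]
  have hfin : V r * r ^ (-n) ≤ 2 * V r0 * r0 ^ (-n) := by linarith
  have hrn1 : r ^ (-n) * r ^ n = 1 := by
    rw [← Real.rpow_add hrpos, neg_add_cancel, Real.rpow_zero]
  calc V r = V r * r ^ (-n) * r ^ n := by rw [mul_assoc, hrn1, mul_one]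
    _ ≤ 2 * V r0 * r0 ^ (-n) * r ^ n :=
        mul_le_mul_of_nonneg_right hfin (Real.rpow_pos_of_pos hrpos n).le
    _ = 2 * V r0 / r0 ^ n * r ^ n := by rw [Real.rpow_neg hr0pos.le]; ring
end
end
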